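/- Let X be uniformly distributed on the open unit disc, r ∈ (0,1), and Y = r - Re(1/(r-X)). Then Y has mean zero, and there is an absolute constant C₁ such that for all m ≥ 2, |E[Y · 1_{|Y| ≤ m}]| ≤ C₁/m. -/

import Mathlib

/-!
Everything rests on the Cauchy transform of a disc, `∫_{|z| < R} (w - z)⁻¹ dA(z) = π w̄` for
`|w| < R`: in polar coordinates, the mean of `(w - z)⁻¹` over the circle `|z| = ρ` is `w⁻¹` for
`ρ < |w|` (mean value property) and `0` for `ρ > |w|`, so the integral is
`∫₀^{|w|} 2πρ w⁻¹ dρ = π |w|² / w`. Hence `E[Y] = r - r = 0`.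

Since the mean vanishes, `E[Y; |Y| ≤ m] = -E[Y; |Y| > m]`. As `|Y| ≤ 1 + |X - r|⁻¹`, the event
`|Y| > m ≥ 2` forces `|X - r| < 2/m`, and `∫_{|z - r| < ε} (1 + |z - r|⁻¹) dA = π ε² + 2π ε`,
which bounds the tail by `6/m`.
-/

open Real Complex MeasureTheory Set Metric ComplexConjugate ProbabilityTheory

/-- The uniform probability measure on the open unit disc in `ℂ`. -/
noncomputable def unifDisc : Measure ℂ :=
  (volume (Metric.ball (0 : ℂ) 1))⁻¹ • volume.restrict (Metric.ball (0 : ℂ) 1)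

theorem Complex.integrable_iff_integrableOn_polarCoord_symm {E : Type*} [NormedAddCommGroup E]
    [NormedSpace ℝ E] {f : ℂ → E} :
    Integrable f ↔
      IntegrableOn (fun p : ℝ × ℝ => p.1 • f (Complex.polarCoord.symm p)) polarCoord.target := by
  have himage : polarCoord.symm '' polarCoord.target = polarCoord.source :=
    polarCoord.symm.image_source_eq_target
  rw [← (Complex.volume_preserving_equiv_real_prod.symm).integrable_comp_emb
      measurableEquivRealProd.symm.measurableEmbedding,
    ← integrableOn_univ, ← integrableOn_congr_set_ae polarCoord_source_ae_eq_univ, ← himage,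
    integrableOn_image_iff_integrableOn_abs_det_fderiv_smul volume
      polarCoord.open_target.measurableSet
      (fun p _ => (hasFDerivAt_polarCoord_symm p).hasFDerivWithinAt) polarCoord.symm.injOn]
  refine integrableOn_congr_fun (fun p hp => ?_) polarCoord.open_target.measurableSet
  rw [Function.comp_apply, measurableEquivRealProd_symm_polarCoord_symm_apply,
    det_fderivPolarCoordSymm, abs_of_pos (show 0 < p.1 from hp.1)]

theorem circleAverage_eq_setIntegral_Ioo {E : Type*} [NormedAddCommGroup E] [NormedSpace ℝ E]
    (f : ℂ → E) (ρ : ℝ) :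
    circleAverage f 0 ρ = (2 * π)⁻¹ • ∫ θ in Ioo (-π) π, f (Complex.polarCoord.symm (ρ, θ)) := by
  have hcircle : ∀ θ, Complex.polarCoord.symm (ρ, θ) = circleMap 0 ρ θ := fun θ => by
    rw [Complex.polarCoord_symm_apply, circleMap_zero, exp_mul_I]
    push_cast; ring
  rw [circleAverage_eq_integral_add (-π), intervalIntegral.integral_comp_add_right
      (fun θ => f (circleMap 0 ρ θ)), ← integral_Ioc_eq_integral_Ioo,
    ← intervalIntegral.integral_of_le (by linarith [pi_pos])]
  simp only [hcircle]
  ring_nf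

theorem integral_eq_integral_Ioi_circleAverage {E : Type*} [NormedAddCommGroup E]
    [NormedSpace ℝ E] [CompleteSpace E] {f : ℂ → E} (hf : Integrable f) :
    ∫ z, f z = ∫ ρ in Ioi 0, (2 * π * ρ) • circleAverage f 0 ρ := by
  have hpolar := Complex.integrable_iff_integrableOn_polarCoord_symm.mp hf
  have htarget : polarCoord.target = Ioi 0 ×ˢ Ioo (-π) π := rfl
  rw [htarget, Measure.volume_eq_prod] at hpolar
  rw [← Complex.integral_comp_polarCoord_symm, htarget, Measure.volume_eq_prod,
    setIntegral_prod _ hpolar]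
  refine setIntegral_congr_fun measurableSet_Ioi fun ρ _ => ?_
  rw [circleAverage_eq_setIntegral_Ioo, integral_smul, smul_smul]
  field_simp [pi_pos.ne']

theorem circleAverage_inv_sub_of_abs_lt_norm {w : ℂ} {R : ℝ} (h : |R| < ‖w‖) :
    circleAverage (fun z => (w - z)⁻¹) 0 R = w⁻¹ := by
  have hd : DifferentiableOn ℂ (fun z => (w - z)⁻¹) (closedBall 0 |R|) :=
    (differentiableOn_const w |>.sub differentiableOn_id).inv fun z hz =>
      sub_ne_zero.2 <| ne_of_apply_ne norm ((mem_closedBall_zero_iff.1 hz).trans_lt h).ne'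
  simpa using (hd.mono closure_ball_subset_closedBall).diffContOnCl.circleAverage

theorem circleAverage_inv_sub_of_norm_lt_abs {w : ℂ} {R : ℝ} (h : ‖w‖ < |R|) :
    circleAverage (fun z => (w - z)⁻¹) 0 R = 0 := by
  have hden : ∀ z ∈ closedBall (0 : ℂ) |1|, w * z - R ≠ 0 := fun z hz => by
    rw [abs_one, mem_closedBall_zero_iff] at hz
    refine sub_ne_zero.2 fun hwz => h.not_ge ?_
    calc |R| = ‖w * z‖ := by rw [hwz, norm_real, norm_eq_abs]
      _ ≤ ‖w‖ := by rw [norm_mul]; exact mul_le_of_le_one_right (norm_nonneg w) hz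
  have hd : DifferentiableOn ℂ (fun z => z / (w * z - R)) (closedBall 0 |1|) :=
    differentiableOn_id.div ((differentiableOn_const w).mul differentiableOn_id |>.sub
      (differentiableOn_const _)) hden
  -- rescaling to the unit circle and inverting turns the integrand into `z / (w z - R)`,
  -- which is holomorphic on the closed unit disc
  calc circleAverage (fun z => (w - z)⁻¹) 0 R
      = circleAverage (fun z => (w - (R * z⁻¹ + 0))⁻¹) 0 1 := by
        rw [circleAverage_eq_circleAverage_zero_one, ← circleAverage_zero_one_congr_inv]
    _ = circleAverage (fun z => z / (w * z - R)) 0 1 := by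
        refine circleAverage_congr_sphere fun z hz => ?_
        have hz0 : z ≠ 0 := ne_zero_of_mem_sphere (abs_ne_zero.2 one_ne_zero) ⟨z, hz⟩
        rw [add_zero, show w - R * z⁻¹ = (w * z - R) / z by field_simp, inv_div]
    _ = 0 := by simpa using (hd.mono closure_ball_subset_closedBall).diffContOnCl.circleAverage

theorem Complex.volume_real_ball (a : ℂ) {r : ℝ} (hr : 0 ≤ r) :
    volume.real (ball a r) = π * r ^ 2 := by
  simp [measureReal_def, hr, mul_comm]

theorem indicator_ball_inv_norm_sub (c : ℂ) (R : ℝ) :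
    (ball c R).indicator (fun z => ‖z - c‖⁻¹) =
      fun z => (ball 0 R).indicator (fun z => ‖z‖⁻¹) (z - c) := by
  ext z
  simp [indicator, dist_eq_norm]

theorem integrableOn_ball_inv_norm_sub (c : ℂ) (R : ℝ) :
    IntegrableOn (fun z => ‖z - c‖⁻¹) (ball c R) := by
  have hzero : IntegrableOn (fun z : ℂ => ‖z‖⁻¹) (ball 0 R) :=
    integrableOn_ball_of_norm_le_rpow (C := 1) (α := 1) (by simp) (by simp)
      (.of_forall fun z => by simp [Real.rpow_neg_one]) (by fun_prop)
  rw [← integrable_indicator_iff measurableSet_ball, indicator_ball_inv_norm_sub]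
  exact ((integrable_indicator_iff measurableSet_ball).2 hzero).comp_sub_right c

theorem integral_ball_inv_norm_sub (c : ℂ) {R : ℝ} (hR : 0 ≤ R) :
    ∫ z in ball c R, ‖z - c‖⁻¹ = 2 * π * R := by
  have hradial : ∀ z : ℂ, (ball 0 R).indicator (fun z => ‖z‖⁻¹) z =
      (Iio R).indicator (fun y => y⁻¹) ‖z‖ := fun z => by
    simp [indicator]
  have hIoi : ∫ y in Ioi (0 : ℝ), y * (Iio R).indicator (fun y => y⁻¹) y = R := by
    rw [setIntegral_congr_fun measurableSet_Ioi (g := (Iio R).indicator 1) fun y (hy : 0 < y) => by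
      by_cases hyR : y < R <;> simp [hyR, hy.ne']]
    rw [setIntegral_indicator measurableSet_Iio, Ioi_inter_Iio]
    simp [hR]
  rw [← integral_indicator measurableSet_ball, indicator_ball_inv_norm_sub,
    integral_sub_right_eq_self (fun z => (ball 0 R).indicator (fun z => ‖z‖⁻¹) z) c]
  simp only [hradial]
  rw [integral_fun_norm_addHaar volume (fun y => (Iio R).indicator (fun y => y⁻¹) y)]
  norm_num [Complex.volume_real_ball 0 zero_le_one, hIoi]
  ring

theorem integrableOn_ball_inv_sub (w c : ℂ) (R : ℝ) :
    IntegrableOn (fun z => (w - z)⁻¹) (ball c R) := by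
  have hsub : ball c R ⊆ ball w (R + ‖c - w‖) := fun z hz => by
    rw [mem_ball, dist_eq_norm] at hz ⊢
    calc ‖z - w‖ ≤ ‖z - c‖ + ‖c - w‖ := norm_sub_le_norm_sub_add_norm_sub z c w
      _ < R + ‖c - w‖ := by gcongr
  refine ((integrableOn_ball_inv_norm_sub w _).mono_set hsub).mono' (by fun_prop) ?_
  exact .of_forall fun z => by rw [norm_inv, norm_sub_rev]

theorem integral_ball_inv_sub {w : ℂ} {R : ℝ} (hw : ‖w‖ < R) :
    ∫ z in ball 0 R, (w - z)⁻¹ = π * conj w := by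
  set f := (ball 0 R).indicator fun z => (w - z)⁻¹
  have hf : Integrable f := (integrable_indicator_iff measurableSet_ball).2
    (integrableOn_ball_inv_sub w 0 R)
  have hradial : ∀ᵐ ρ ∂volume.restrict (Ioi 0), (2 * π * ρ) • circleAverage f 0 ρ =
      (Ioo 0 ‖w‖).indicator (fun ρ => (2 * π * ρ) • w⁻¹) ρ := by
    filter_upwards [ae_restrict_mem measurableSet_Ioi,
      ae_restrict_of_ae ((toFinite {R, ‖w‖}).countable.ae_notMem volume)] with ρ (hρ : 0 < ρ) hρne
    simp only [mem_insert_iff, mem_singleton_iff, not_or] at hρne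
    rcases lt_or_gt_of_ne hρne.1 with hρR | hρR
    · have hsphere : circleAverage f 0 ρ = circleAverage (fun z => (w - z)⁻¹) 0 ρ :=
        circleAverage_congr_sphere fun z hz => indicator_of_mem (by
          rw [mem_sphere_zero_iff_norm, abs_of_pos hρ] at hz
          rwa [mem_ball_zero_iff, hz]) _
      rw [hsphere]
      rcases lt_or_gt_of_ne hρne.2 with hρw | hρw
      · rw [circleAverage_inv_sub_of_abs_lt_norm (by rwa [abs_of_pos hρ]),
          indicator_of_mem (by exact ⟨hρ, hρw⟩)]
      · rw [circleAverage_inv_sub_of_norm_lt_abs (by rwa [abs_of_pos hρ]), smul_zero,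
          indicator_of_notMem (fun h => h.2.not_gt hρw)]
    · have hsphere : circleAverage f 0 ρ = circleAverage (fun _ => (0 : ℂ)) 0 ρ :=
        circleAverage_congr_sphere fun z hz => indicator_of_notMem (by
          rw [mem_sphere_zero_iff_norm, abs_of_pos hρ] at hz
          rw [mem_ball_zero_iff, hz]; exact hρR.le.not_gt) _
      rw [hsphere, circleAverage_const, smul_zero,
        indicator_of_notMem (fun h => h.2.not_gt (hw.trans hρR))]
  rw [← integral_indicator measurableSet_ball, integral_eq_integral_Ioi_circleAverage hf,
    integral_congr_ae hradial, setIntegral_indicator measurableSet_Ioo,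
    inter_eq_self_of_subset_right Ioo_subset_Ioi_self, integral_smul_const,
    ← integral_Ioc_eq_integral_Ioo, ← intervalIntegral.integral_of_le (norm_nonneg w),
    intervalIntegral.integral_const_mul, integral_id]
  rcases eq_or_ne w 0 with rfl | hw0
  · simp
  rw [Complex.real_smul, zero_pow two_ne_zero, sub_zero]
  push_cast
  rw [← Complex.mul_conj' w]
  field_simp

theorem unifDisc_eq_cond : unifDisc = volume[|ball 0 1] := rfl

instance : IsProbabilityMeasure unifDisc :=
  unifDisc_eq_cond ▸ cond_isProbabilityMeasure_of_finite (by simp [NNReal.pi_ne_zero]) (by simp)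

theorem unifDisc_eq_smul : unifDisc = ENNReal.ofReal π⁻¹ • volume.restrict (ball 0 1) := by
  rw [unifDisc, Complex.volume_ball, ENNReal.ofReal_inv_of_pos pi_pos]
  simp [← ENNReal.ofReal_coe_nnreal]

theorem integrable_unifDisc_iff {E : Type*} [NormedAddCommGroup E] {f : ℂ → E} :
    Integrable f unifDisc ↔ IntegrableOn f (ball 0 1) := by
  rw [unifDisc_eq_smul, integrable_smul_measure (by simp [pi_pos]) ENNReal.ofReal_ne_top]
  rfl

theorem integral_unifDisc {E : Type*} [NormedAddCommGroup E] [NormedSpace ℝ E] (f : ℂ → E) :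
    ∫ z, f z ∂unifDisc = π⁻¹ • ∫ z in ball 0 1, f z := by
  rw [unifDisc_eq_smul, integral_smul_measure, ENNReal.toReal_ofReal (by positivity)]

theorem unifDisc_le_smul_volume : unifDisc ≤ ENNReal.ofReal π⁻¹ • volume := by
  rw [unifDisc_eq_smul]
  exact smul_le_smul_left _ Measure.restrict_le_self

theorem integral_inv_sub_unifDisc {w : ℂ} (hw : ‖w‖ < 1) :
    ∫ z, (w - z)⁻¹ ∂unifDisc = conj w := by
  rw [integral_unifDisc, integral_ball_inv_sub hw, Complex.real_smul]
  push_cast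
  field_simp [pi_pos.ne']

theorem integrable_inv_sub_unifDisc (w : ℂ) : Integrable (fun z => (w - z)⁻¹) unifDisc :=
  integrable_unifDisc_iff.2 (integrableOn_ball_inv_sub w 0 1)

theorem integrable_sub_re_inv_sub_unifDisc (r : ℝ) :
    Integrable (fun z : ℂ => r - (((r : ℂ) - z)⁻¹).re) unifDisc :=
  (integrable_const r).sub (integrable_inv_sub_unifDisc r).re

theorem integral_sub_re_inv_sub_unifDisc {r : ℝ} (hr : |r| < 1) :
    ∫ z, (r - (((r : ℂ) - z)⁻¹).re) ∂unifDisc = 0 := by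
  have hint := integrable_inv_sub_unifDisc r
  have hre : ∫ z, (((r : ℂ) - z)⁻¹).re ∂unifDisc = (∫ z, ((r : ℂ) - z)⁻¹ ∂unifDisc).re :=
    integral_re hint
  have hint_re : Integrable (fun z => (((r : ℂ) - z)⁻¹).re) unifDisc := hint.re
  rw [integral_sub (integrable_const r) hint_re, integral_const, hre,
    integral_inv_sub_unifDisc (by rwa [norm_real, norm_eq_abs])]
  simp

theorem abs_setIntegral_le_setIntegral_compl_abs {α : Type*} [MeasurableSpace α] {μ : Measure α}
    {f : α → ℝ} {s : Set α} (hs : MeasurableSet s) (hf : Integrable f μ)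
    (hmean : ∫ x, f x ∂μ = 0) :
    |∫ x in s, f x ∂μ| ≤ ∫ x in sᶜ, |f x| ∂μ := by
  have hsplit := integral_add_compl hs hf
  rw [hmean, add_eq_zero_iff_eq_neg] at hsplit
  rw [hsplit, abs_neg]
  exact abs_integral_le_integral_abs

theorem abs_sub_re_inv_sub_le (a : ℝ) (w z : ℂ) :
    |a - ((w - z)⁻¹).re| ≤ |a| + ‖z - w‖⁻¹ := by
  calc |a - ((w - z)⁻¹).re| ≤ |a| + |((w - z)⁻¹).re| := abs_sub _ _
    _ ≤ |a| + ‖z - w‖⁻¹ := by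
      rw [norm_sub_rev, ← norm_inv]
      gcongr
      exact abs_re_le_norm _

theorem compl_setOf_abs_sub_re_inv_sub_le_subset_ball {a m : ℝ} (ha : |a| ≤ 1) (hm : 2 ≤ m)
    (w : ℂ) :
    {z | |a - ((w - z)⁻¹).re| ≤ m}ᶜ ⊆ ball w (2 / m) := by
  intro z hz
  replace hz : m < |a - ((w - z)⁻¹).re| := not_le.1 hz
  rw [mem_ball, dist_eq_norm]
  rcases (norm_nonneg (z - w)).eq_or_lt with h0 | hpos
  · rw [← h0]; positivity
  have hinv : m / 2 < ‖z - w‖⁻¹ := by linarith [abs_sub_re_inv_sub_le a w z]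
  rwa [lt_inv_comm₀ (by positivity) hpos, inv_div] at hinv

theorem setIntegral_compl_abs_sub_re_inv_sub_le {a m : ℝ} (ha : |a| ≤ 1) (hm : 2 ≤ m) (w : ℂ) :
    ∫ z in {z | |a - ((w - z)⁻¹).re| ≤ m}ᶜ, |a - ((w - z)⁻¹).re| ∂unifDisc ≤ 6 / m := by
  set ε := 2 / m with hε_def
  have hε : 0 < ε := by positivity
  set ν := ENNReal.ofReal π⁻¹ • volume.restrict (ball w ε)
  have hone : IntegrableOn (fun _ => (1 : ℝ)) (ball w ε) :=
    integrableOn_const measure_ball_lt_top.ne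
  have hle : unifDisc.restrict {z | |a - ((w - z)⁻¹).re| ≤ m}ᶜ ≤ ν :=
    (Measure.restrict_mono (compl_setOf_abs_sub_re_inv_sub_le_subset_ball ha hm w) le_rfl).trans
      (by simpa using Measure.restrict_mono_measure unifDisc_le_smul_volume (ball w ε))
  have hint : Integrable (fun z => 1 + ‖z - w‖⁻¹) ν :=
    (hone.add (integrableOn_ball_inv_norm_sub w ε)).smul_measure ENNReal.ofReal_ne_top
  calc ∫ z in {z | |a - ((w - z)⁻¹).re| ≤ m}ᶜ, |a - ((w - z)⁻¹).re| ∂unifDisc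
      ≤ ∫ z in {z | |a - ((w - z)⁻¹).re| ≤ m}ᶜ, (1 + ‖z - w‖⁻¹) ∂unifDisc :=
        integral_mono_of_nonneg (.of_forall fun z => abs_nonneg _) (hint.mono_measure hle)
          (.of_forall fun z => (abs_sub_re_inv_sub_le a w z).trans (add_le_add_left ha _))
    _ ≤ ∫ z, (1 + ‖z - w‖⁻¹) ∂ν :=
        integral_mono_measure hle (.of_forall fun z => by positivity) hint
    _ = π⁻¹ * (π * ε ^ 2 + 2 * π * ε) := by
        rw [integral_smul_measure, ENNReal.toReal_ofReal (by positivity), smul_eq_mul,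
          integral_add hone (integrableOn_ball_inv_norm_sub w ε),
          setIntegral_const, integral_ball_inv_norm_sub w hε.le, Complex.volume_real_ball w hε.le,
          smul_eq_mul, mul_one]
    _ = ε * ε + 2 * ε := by field_simp [pi_pos.ne']
    _ ≤ 3 * ε := by nlinarith [(div_le_one (by positivity : (0 : ℝ) < m)).2 hm]
    _ = 6 / m := by rw [hε_def]; ring

/-- For `X` uniform on the unit disc, `r ∈ (0,1)` and `Y = r - Re(1/(r - X))`: `Y` is
integrable with mean zero, and there is an absolute constant `C₁` such that for all `m ≥ 2`,
`|E[Y 1_{|Y| ≤ m}]| ≤ C₁/m`. -/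
theorem truncated_first_moment_of_Y :
    (∀ r : ℝ, 0 < r → r < 1 →
        Integrable (fun z : ℂ => r - (((r : ℂ) - z)⁻¹).re) unifDisc ∧
        ∫ z, (r - (((r : ℂ) - z)⁻¹).re) ∂unifDisc = 0) ∧
    ∃ C₁ : ℝ, ∀ r : ℝ, 0 < r → r < 1 → ∀ m : ℝ, 2 ≤ m →
      |∫ z in {z : ℂ | |r - (((r : ℂ) - z)⁻¹).re| ≤ m},
          (r - (((r : ℂ) - z)⁻¹).re) ∂unifDisc| ≤ C₁ / m := by
  have habs : ∀ r : ℝ, 0 < r → r < 1 → |r| < 1 := fun r hr0 hr1 => abs_lt.2 ⟨by linarith, hr1⟩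
  refine ⟨fun r hr0 hr1 => ⟨integrable_sub_re_inv_sub_unifDisc r,
    integral_sub_re_inv_sub_unifDisc (habs r hr0 hr1)⟩, 6, fun r hr0 hr1 m hm => ?_⟩
  set S := {z : ℂ | |r - (((r : ℂ) - z)⁻¹).re| ≤ m}
  have hS : MeasurableSet S := measurableSet_le (by fun_prop) measurable_const
  calc _ ≤ ∫ z in Sᶜ, |r - (((r : ℂ) - z)⁻¹).re| ∂unifDisc :=
        abs_setIntegral_le_setIntegral_compl_abs hS (integrable_sub_re_inv_sub_unifDisc r)
          (integral_sub_re_inv_sub_unifDisc (habs r hr0 hr1))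
    _ ≤ 6 / m := setIntegral_compl_abs_sub_re_inv_sub_le (habs r hr0 hr1).le hm r
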